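/- arXiv:2001.04087 — 2 statements merged into one kernel-verified Lean document; each statement's English description precedes it below -/
import Mathlib

section
/- Let (M, g) be a closed Riemannian n-manifold with n ≥ 3, f a smooth function on M, α ∈ ℝ and β ≥ (n−2)α²/(4(n−1)). If Sc_g + α Δ_g f − β |∇_g f|² > 0 everywhere, then for every nontrivial u ∈ C^∞(M), ∫_M (|∇_g u|² + (n−2)/(4(n−1)) Sc_g u²) dVol_g > 0; consequently the conformal Laplacian L_g = Δ_g − (n−2)/(4(n−1)) Sc_g has positive Yamabe-type quadratic form and there exists a metric conformal to g with positive scalar curvature. -/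
open MeasureTheory

/-- Conformal-Laplacian positivity on a closed `n`-manifold (`n ≥ 3`) with
`Sc_{α,β} > 0`, `β ≥ (n−2)α²/(4(n−1))`. The manifold is abstracted by its volume
measure `μ` and the functions `Sc`, `Δf`, `|∇f|²`; a test function `u` carries the
data `gu2 = |∇u|²` and `inn = ⟨∇f, ∇u⟩`, subject to Cauchy–Schwarz and Green's
identity `∫ Δf·u² = −2∫ u⟨∇f,∇u⟩`. For every nontrivial `u`,
`∫ (|∇u|² + (n−2)/(4(n−1)) Sc u²) > 0`, i.e. `−∫ u L_g u > 0` (whence a conformal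
metric of positive scalar curvature exists). -/
theorem stmt_9 (n : ℕ) (hn : 3 ≤ n) {M : Type*} [TopologicalSpace M] [CompactSpace M]
    [MeasurableSpace M] (μ : Measure M) [IsFiniteMeasure μ]
    (Sc lapf grad2 : M → ℝ) (α β : ℝ)
    (hβ : ((n : ℝ) - 2) * α ^ 2 / (4 * ((n : ℝ) - 1)) ≤ β)
    (hgrad2 : ∀ x, 0 ≤ grad2 x)
    (hcont : Continuous fun x => Sc x + α * lapf x - β * grad2 x)
    (hpos : ∀ x, 0 < Sc x + α * lapf x - β * grad2 x)
    (u gu2 inn : M → ℝ) (hgu2 : ∀ x, 0 ≤ gu2 x)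
    (hCS : ∀ x, |inn x| ≤ Real.sqrt (grad2 x) * Real.sqrt (gu2 x))
    (hu_int : Integrable (fun x => (u x) ^ 2) μ) (hgu2_int : Integrable gu2 μ)
    (hScu_int : Integrable (fun x => Sc x * (u x) ^ 2) μ)
    (hlapfu_int : Integrable (fun x => lapf x * (u x) ^ 2) μ)
    (hgrad2u_int : Integrable (fun x => grad2 x * (u x) ^ 2) μ)
    (hinnu_int : Integrable (fun x => u x * inn x) μ)
    (hGreen : ∫ x, lapf x * (u x) ^ 2 ∂μ = -2 * ∫ x, u x * inn x ∂μ)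
    (hu_nontrivial : 0 < ∫ x, (u x) ^ 2 ∂μ) :
    0 < ∫ x, (gu2 x + ((n : ℝ) - 2) / (4 * ((n : ℝ) - 1)) * Sc x * (u x) ^ 2) ∂μ := by
  have hn3 : (3:ℝ) ≤ (n:ℝ) := by exact_mod_cast hn
  set c : ℝ := ((n : ℝ) - 2) / (4 * ((n : ℝ) - 1)) with hc
  have hcpos : 0 < c := div_pos (by linarith) (by linarith)
  have hβ' : c * α ^ 2 ≤ β := by rw [hc, div_mul_eq_mul_div]; exact hβ
  -- M is nonempty
  have hne : Nonempty M := by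
    by_contra h
    rw [not_nonempty_iff] at h
    rw [integral_of_isEmpty] at hu_nontrivial
    exact lt_irrefl 0 hu_nontrivial
  -- minimum of S := Sc + α Δf − β |∇f|²
  obtain ⟨x₀, -, hx₀⟩ := isCompact_univ.exists_isMinOn (Set.univ_nonempty)
    hcont.continuousOn
  set ε : ℝ := Sc x₀ + α * lapf x₀ - β * grad2 x₀ with hε
  have hεpos : 0 < ε := hpos x₀
  -- integrability of S u²
  have hSint : Integrable (fun x => (Sc x + α * lapf x - β * grad2 x) * u x ^ 2) μ := by
    have heq : (fun x => (Sc x + α * lapf x - β * grad2 x) * u x ^ 2)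
        = fun x => Sc x * u x ^ 2 + α * (lapf x * u x ^ 2) - β * (grad2 x * u x ^ 2) := by
      funext x; ring
    rw [heq]
    exact (hScu_int.add (hlapfu_int.const_mul α)).sub (hgrad2u_int.const_mul β)
  have hεU : ε * ∫ x, u x ^ 2 ∂μ ≤ ∫ x, (Sc x + α * lapf x - β * grad2 x) * u x ^ 2 ∂μ := by
    rw [← integral_const_mul]
    refine integral_mono (hu_int.const_mul ε) hSint fun x => ?_
    exact mul_le_mul_of_nonneg_right (hx₀ (Set.mem_univ x)) (sq_nonneg _)
  -- the pointwise nonnegative function F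
  have hF_nonneg : ∀ x, 0 ≤ gu2 x + 2 * c * α * (u x * inn x) + c * β * (grad2 x * u x ^ 2) := by
    intro x
    set a : ℝ := Real.sqrt (gu2 x) with hadef
    set b : ℝ := Real.sqrt (grad2 x) with hbdef
    have ha : a ^ 2 = gu2 x := Real.sq_sqrt (hgu2 x)
    have hb : b ^ 2 = grad2 x := Real.sq_sqrt (hgrad2 x)
    have ha0 : 0 ≤ a := Real.sqrt_nonneg _
    have hb0 : 0 ≤ b := Real.sqrt_nonneg _
    have h1 : |u x * inn x| ≤ |u x| * (b * a) := by
      rw [abs_mul]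
      exact mul_le_mul_of_nonneg_left (hCS x) (abs_nonneg _)
    have h2 : |2 * c * α * (u x * inn x)| ≤ 2 * c * |α| * (|u x| * (b * a)) := by
      calc |2 * c * α * (u x * inn x)| = |2 * c * α| * |u x * inn x| := abs_mul _ _
        _ = 2 * c * |α| * |u x * inn x| := by
            rw [abs_mul, abs_of_pos (by linarith : (0:ℝ) < 2 * c)]
        _ ≤ 2 * c * |α| * (|u x| * (b * a)) :=
            mul_le_mul_of_nonneg_left h1 (by positivity)
    have h4 : -(2 * c * |α| * (|u x| * (b * a))) ≤ 2 * c * α * (u x * inn x) :=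
      le_trans (neg_le_neg h2) (neg_abs_le _)
    have e1 : (c * |α| * (b * |u x|)) ^ 2 = c ^ 2 * α ^ 2 * (b ^ 2 * u x ^ 2) := by
      rw [mul_pow, mul_pow, mul_pow, sq_abs, sq_abs]
    rw [← ha, ← hb]
    nlinarith [sq_nonneg (a - c * |α| * (b * |u x|)), e1, h4,
      mul_nonneg (mul_nonneg hcpos.le (sub_nonneg.2 hβ'))
        (mul_nonneg (sq_nonneg b) (sq_nonneg (u x))),
      sq_abs (u x)]
  have hF_int : Integrable
      (fun x => gu2 x + 2 * c * α * (u x * inn x) + c * β * (grad2 x * u x ^ 2)) μ :=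
    (hgu2_int.add (hinnu_int.const_mul (2 * c * α))).add (hgrad2u_int.const_mul (c * β))
  have hF_nn : 0 ≤ ∫ x, (gu2 x + 2 * c * α * (u x * inn x) + c * β * (grad2 x * u x ^ 2)) ∂μ :=
    integral_nonneg hF_nonneg
  -- integral splittings
  have iSc : Integrable (fun x => c * (Sc x * u x ^ 2)) μ := hScu_int.const_mul c
  have i1 : Integrable (fun x => 2 * c * α * (u x * inn x)) μ := hinnu_int.const_mul _
  have i2 : Integrable (fun x => c * β * (grad2 x * u x ^ 2)) μ := hgrad2u_int.const_mul _
  have i12 : Integrable (fun x => gu2 x + 2 * c * α * (u x * inn x)) μ := hgu2_int.add i1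
  have j1 : Integrable (fun x => α * (lapf x * u x ^ 2)) μ := hlapfu_int.const_mul _
  have j2 : Integrable (fun x => β * (grad2 x * u x ^ 2)) μ := hgrad2u_int.const_mul _
  have j12 : Integrable (fun x => Sc x * u x ^ 2 + α * (lapf x * u x ^ 2)) μ := hScu_int.add j1
  have eG : ∫ x, (gu2 x + c * Sc x * u x ^ 2) ∂μ
      = ∫ x, gu2 x ∂μ + c * ∫ x, Sc x * u x ^ 2 ∂μ := by
    simp_rw [mul_assoc]
    rw [integral_add hgu2_int iSc, integral_const_mul]
  have eF : ∫ x, (gu2 x + 2 * c * α * (u x * inn x) + c * β * (grad2 x * u x ^ 2)) ∂μ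
      = ∫ x, gu2 x ∂μ + 2 * c * α * ∫ x, u x * inn x ∂μ
        + c * β * ∫ x, grad2 x * u x ^ 2 ∂μ := by
    rw [integral_add i12 i2, integral_add hgu2_int i1,
      integral_const_mul, integral_const_mul]
  have eS : ∫ x, (Sc x + α * lapf x - β * grad2 x) * u x ^ 2 ∂μ
      = ∫ x, Sc x * u x ^ 2 ∂μ - 2 * α * ∫ x, u x * inn x ∂μ
        - β * ∫ x, grad2 x * u x ^ 2 ∂μ := by
    have heq : (fun x => (Sc x + α * lapf x - β * grad2 x) * u x ^ 2)
        = fun x => Sc x * u x ^ 2 + α * (lapf x * u x ^ 2) - β * (grad2 x * u x ^ 2) := by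
      funext x; ring
    rw [heq, integral_sub j12 j2, integral_add hScu_int j1,
      integral_const_mul, integral_const_mul, hGreen]
    ring
  have key : ∫ x, (gu2 x + c * Sc x * u x ^ 2) ∂μ
      = ∫ x, (gu2 x + 2 * c * α * (u x * inn x) + c * β * (grad2 x * u x ^ 2)) ∂μ
        + c * ∫ x, (Sc x + α * lapf x - β * grad2 x) * u x ^ 2 ∂μ := by
    rw [eG, eF, eS]; ring
  have : (0:ℝ) < c * (ε * ∫ x, u x ^ 2 ∂μ) :=
    mul_pos hcpos (mul_pos hεpos hu_nontrivial)
  calc (0:ℝ) < c * (ε * ∫ x, u x ^ 2 ∂μ) := this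
    _ ≤ ∫ x, (gu2 x + 2 * c * α * (u x * inn x) + c * β * (grad2 x * u x ^ 2)) ∂μ
        + c * ∫ x, (Sc x + α * lapf x - β * grad2 x) * u x ^ 2 ∂μ := by
        have := mul_le_mul_of_nonneg_left hεU hcpos.le
        linarith
    _ = ∫ x, (gu2 x + c * Sc x * u x ^ 2) ∂μ := key.symm
end

section
/- Key integral estimate: Let (M,g) be a closed n-dimensional Riemannian manifold, f, u smooth functions on M, α, β real numbers, Sc_{α,β} defined by Sc_g = Sc_{α,β} − α Δ_g f + β|∇_g f|², c ≠ 0 a real number, and a = (n−2)/(4(n−1)). Then ∫_M [|∇_g u|² + a Sc_g u²] dVol_g ≥ ∫_M [ (1 − 2a|α| c^{-2}) |∇_g u|² + a(β − |α|c²)|∇_g f|² u² + a Sc_{α,β} u² ] dVol_g, as follows from the identity Sc_g = Sc_{α,β} − α Δ_g f + β|∇_g f|², the integration by parts ∫ (Δ_g f) u² = −∫ ⟨∇f, ∇(u²)⟩ = −2∫ u⟨∇f,∇u⟩, and the AM–GM bound |u⟨∇f,∇u⟩| ≤ (c²|∇f|²u² + c^{-2}|∇u|²)/2. -/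
open MeasureTheory

/-- Key integral estimate: on a closed manifold abstracted by its volume measure `μ`,
with `Sc_{α,β} = Sc + αΔf − β|∇f|²`, Green's identity `∫ Δf·u² = −2∫ u⟨∇f,∇u⟩` and
Cauchy–Schwarz `|⟨∇f,∇u⟩| ≤ |∇f||∇u|`, one has for any `c ≠ 0` and `a > 0`:
`∫ (|∇u|² + a·Sc·u²) ≥ ∫ [(1 − 2a|α|c⁻²)|∇u|² + a(β − |α|c²)|∇f|²u² + a·Sc_{α,β}·u²]`. -/
theorem stmt_10 {M : Type*} [MeasurableSpace M] (μ : Measure M) [IsFiniteMeasure μ]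
    (Sc lapf grad2 Scαβ : M → ℝ) (α β a c : ℝ) (hc : c ≠ 0) (ha : 0 < a)
    (hScαβ : ∀ x, Scαβ x = Sc x + α * lapf x - β * grad2 x)
    (hgrad2 : ∀ x, 0 ≤ grad2 x)
    (u gu2 inn : M → ℝ) (hgu2 : ∀ x, 0 ≤ gu2 x)
    (hCS : ∀ x, |inn x| ≤ Real.sqrt (grad2 x) * Real.sqrt (gu2 x))
    (hgu2_int : Integrable gu2 μ)
    (hScu_int : Integrable (fun x => Sc x * (u x) ^ 2) μ)
    (hlapfu_int : Integrable (fun x => lapf x * (u x) ^ 2) μ)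
    (hgrad2u_int : Integrable (fun x => grad2 x * (u x) ^ 2) μ)
    (hinnu_int : Integrable (fun x => u x * inn x) μ)
    (hGreen : ∫ x, lapf x * (u x) ^ 2 ∂μ = -2 * ∫ x, u x * inn x ∂μ) :
    ∫ x, (gu2 x + a * Sc x * (u x) ^ 2) ∂μ ≥
      ∫ x, ((1 - 2 * a * |α| * c⁻¹ ^ 2) * gu2 x
            + a * (β - |α| * c ^ 2) * grad2 x * (u x) ^ 2
            + a * Scαβ x * (u x) ^ 2) ∂μ := by
  have hc2 : (0:ℝ) < c ^ 2 := by positivity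
  -- rewrite RHS integrand
  have hcongr : (fun x => (1 - 2 * a * |α| * c⁻¹ ^ 2) * gu2 x
            + a * (β - |α| * c ^ 2) * grad2 x * (u x) ^ 2
            + a * Scαβ x * (u x) ^ 2)
      = fun x => (gu2 x + a * Sc x * (u x) ^ 2)
          + ((a * α) * (lapf x * (u x) ^ 2)
            - ((2 * a * |α| * c⁻¹ ^ 2) * gu2 x
              + (a * |α| * c ^ 2) * (grad2 x * (u x) ^ 2))) := by
    funext x
    rw [hScαβ x]
    ring
  have hI1 : Integrable (fun x => gu2 x + a * Sc x * (u x) ^ 2) μ := by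
    apply hgu2_int.add
    simpa [mul_assoc] using hScu_int.const_mul a
  have hI2 : Integrable (fun x => (a * α) * (lapf x * (u x) ^ 2)) μ :=
    hlapfu_int.const_mul _
  have hI3 : Integrable (fun x => (2 * a * |α| * c⁻¹ ^ 2) * gu2 x
      + (a * |α| * c ^ 2) * (grad2 x * (u x) ^ 2)) μ :=
    (hgu2_int.const_mul _).add (hgrad2u_int.const_mul _)
  have hI23 : Integrable (fun x => (a * α) * (lapf x * (u x) ^ 2)
      - ((2 * a * |α| * c⁻¹ ^ 2) * gu2 x
        + (a * |α| * c ^ 2) * (grad2 x * (u x) ^ 2))) μ := hI2.sub hI3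
  rw [hcongr, integral_add hI1 hI23, integral_sub hI2 hI3,
    integral_add (hgu2_int.const_mul _) (hgrad2u_int.const_mul _),
    integral_const_mul, integral_const_mul, integral_const_mul, hGreen]
  have hptwise : ∀ x, -(|α| * (c ^ 2 * (grad2 x * (u x) ^ 2) + c⁻¹ ^ 2 * gu2 x))
      ≤ 2 * α * (u x * inn x) := by
    intro x
    have h1 : |u x * inn x| ≤ (Real.sqrt (grad2 x) * |u x|) * Real.sqrt (gu2 x) := by
      rw [abs_mul]
      calc |u x| * |inn x| ≤ |u x| * (Real.sqrt (grad2 x) * Real.sqrt (gu2 x)) :=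
            mul_le_mul_of_nonneg_left (hCS x) (abs_nonneg _)
        _ = (Real.sqrt (grad2 x) * |u x|) * Real.sqrt (gu2 x) := by ring
    have hA : (Real.sqrt (grad2 x)) ^ 2 = grad2 x := Real.sq_sqrt (hgrad2 x)
    have hB : (Real.sqrt (gu2 x)) ^ 2 = gu2 x := Real.sq_sqrt (hgu2 x)
    have habs : |u x| ^ 2 = (u x) ^ 2 := sq_abs _
    have hcabs : |c| ^ 2 = c ^ 2 := sq_abs _
    have hcinv : |c|⁻¹ ^ 2 = c⁻¹ ^ 2 := by rw [← abs_inv, sq_abs]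
    have hone : |c| * |c|⁻¹ = 1 := mul_inv_cancel₀ (abs_ne_zero.mpr hc)
    set A := Real.sqrt (grad2 x) * |u x| with hAdef
    set B := Real.sqrt (gu2 x) with hBdef
    have hA2 : A ^ 2 = grad2 x * (u x) ^ 2 := by rw [hAdef, mul_pow, hA, habs]
    have hB2 : B ^ 2 = gu2 x := hB
    have expand : (|c| * A - |c|⁻¹ * B) ^ 2
        = c ^ 2 * A ^ 2 - 2 * (A * B) + c⁻¹ ^ 2 * B ^ 2 := by
      have h0 : (|c| * A - |c|⁻¹ * B) ^ 2
          = |c| ^ 2 * A ^ 2 - 2 * (|c| * |c|⁻¹) * (A * B) + |c|⁻¹ ^ 2 * B ^ 2 := by ring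
      rw [h0, hone, hcabs, hcinv]; ring
    have hAB : 2 * (A * B)
        ≤ c ^ 2 * (grad2 x * (u x) ^ 2) + c⁻¹ ^ 2 * gu2 x := by
      have := sq_nonneg (|c| * A - |c|⁻¹ * B)
      rw [expand, hA2, hB2] at this
      linarith
    have h4 : |α * (u x * inn x)| ≤ |α| * ((Real.sqrt (grad2 x) * |u x|) * Real.sqrt (gu2 x)) := by
      rw [abs_mul]
      exact mul_le_mul_of_nonneg_left h1 (abs_nonneg α)
    have h5 := neg_abs_le (α * (u x * inn x))
    have h6 : |α| * (2 * (A * B)) ≤ |α| * (c ^ 2 * (grad2 x * (u x) ^ 2) + c⁻¹ ^ 2 * gu2 x) :=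
      mul_le_mul_of_nonneg_left hAB (abs_nonneg α)
    have h7 : |α * (u x * inn x)| ≤ |α| * (A * B) := h4
    linarith
  have hmono : ∫ x, -(|α| * (c ^ 2 * (grad2 x * (u x) ^ 2) + c⁻¹ ^ 2 * gu2 x)) ∂μ
      ≤ ∫ x, 2 * α * (u x * inn x) ∂μ := by
    apply integral_mono _ (hinnu_int.const_mul (2 * α)) hptwise
    exact (((hgrad2u_int.const_mul _).add (hgu2_int.const_mul _)).const_mul _).neg
  rw [integral_neg, integral_const_mul, integral_add (hgrad2u_int.const_mul _) (hgu2_int.const_mul _),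
    integral_const_mul, integral_const_mul, integral_const_mul] at hmono
  have hgu2nn : 0 ≤ ∫ x, gu2 x ∂μ := integral_nonneg hgu2
  nlinarith [mul_le_mul_of_nonneg_left hmono ha.le,
    mul_nonneg (mul_nonneg (mul_nonneg ha.le (abs_nonneg α)) (sq_nonneg c⁻¹)) hgu2nn]
end
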